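/- arXiv:2404.02232 — 2 statements merged into one kernel-verified Lean document; each statement's English description precedes it below -/
import Mathlib

section
/- Let P ∈ PolyStrNNeg, let P₁ be the sum of the maximal monomials of P, and let P₂ := P − P₁. Then there exists K ∈ ℕ such that Δ_K(P₁) + τ_K(P₂) has all coefficients non-negative, i.e., belongs to ℕ[X₁,…,X_k]. -/
/-!
Since `Δ_K(P₁) + τ_K(P₂) = τ_K(P) - P₁`, only the coefficients of `τ_K(P)` matter. Its
`α`-coefficient is `∑_{β ≥ α} c_β (β choose α) K^{|β - α|}`. At a maximal monomial `α` only
`β = α` contributes, and that coefficient cancels against `P₁`. Otherwise the terms of highest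
degree in `K` come from the `β ≥ α` with `|β - α|` largest; these are maximal monomials of `P`,
so their coefficients are positive (`PolyStrNNeg` with no variable substituted), and they
dominate once `K` exceeds the sum of the absolute values of all coefficients involved.
-/

open scoped BigOperators Classical

namespace NRatSeries

/-- All ways to split a word into a prefix and a suffix. -/
def splits {A : Type} (w : List A) : List (List A × List A) :=
  (List.range (w.length + 1)).map (fun i => (w.take i, w.drop i))

/-- All decompositions of `w` into `n` (possibly empty) consecutive factors. -/
def decomps {A : Type} : ℕ → List A → List (List (List A))
  | 0, w => if w.isEmpty then [[]] else []
  | n+1, w => (splits w).flatMap (fun p => (decomps n p.2).map (fun l => p.1 :: l))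

/-- The data defining a (ℤ-valued) polyregular computation of degree `d`:
a finite monoid `M`, a monoid morphism `μ` from words to `M`,
and a production function `π`. -/
structure PolyRegData (A : Type) (d : ℕ) where
  M : Type
  [mon : Monoid M]
  [fin : Fintype M]
  μ : List A → M
  π : (Fin (d + 1) → M) → ℤ
  map_nil : μ [] = 1
  map_append : ∀ u v : List A, μ (u ++ v) = μ u * μ v

attribute [instance] PolyRegData.mon PolyRegData.fin

/-- `D` computes `f` if `f w` is the sum, over all decompositions of `w`
into `d+1` factors, of `π` applied to the images of the factors under `μ`. -/
def PolyRegData.Computes {A : Type} {d : ℕ} (D : PolyRegData A d) (f : List A → ℤ) : Prop :=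
  ∀ w : List A,
    f w = ((decomps (d + 1) w).map (fun l => D.π (fun i => D.μ (l.getD i [])))).sum

/-- The production function takes values in ℕ. -/
def PolyRegData.NatOutput {A : Type} {d : ℕ} (D : PolyRegData A d) : Prop :=
  ∀ v, 0 ≤ D.π v

/-- The monoid is aperiodic. -/
def PolyRegData.AperiodicMonoid {A : Type} {d : ℕ} (D : PolyRegData A d) : Prop :=
  ∀ x : D.M, ∃ n : ℕ, x ^ (n + 1) = x ^ n

/-- ℤ-polyregular of degree at most `d`. -/
def ZPolyD {A : Type} (d : ℕ) (f : List A → ℤ) : Prop :=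
  ∃ D : PolyRegData A d, D.Computes f

/-- ℕ-polyregular of degree at most `d`. -/
def NPolyD {A : Type} (d : ℕ) (f : List A → ℤ) : Prop :=
  ∃ D : PolyRegData A d, D.Computes f ∧ D.NatOutput

/-- star-free ℤ-polyregular of degree at most `d`. -/
def ZSFD {A : Type} (d : ℕ) (f : List A → ℤ) : Prop :=
  ∃ D : PolyRegData A d, D.Computes f ∧ D.AperiodicMonoid

/-- star-free ℕ-polyregular of degree at most `d`. -/
def NSFD {A : Type} (d : ℕ) (f : List A → ℤ) : Prop :=
  ∃ D : PolyRegData A d, D.Computes f ∧ D.NatOutput ∧ D.AperiodicMonoid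

def ZPoly {A : Type} (f : List A → ℤ) : Prop := ∃ d, ZPolyD d f
def NPoly {A : Type} (f : List A → ℤ) : Prop := ∃ d, NPolyD d f
def ZSF {A : Type} (f : List A → ℤ) : Prop := ∃ d, ZSFD d f
def NSF {A : Type} (f : List A → ℤ) : Prop := ∃ d, NSFD d f

/-- A function on words is commutative if it is invariant under permutations
of its input, i.e. only depends on the letter counts. -/
def Commutes {A : Type} (f : List A → ℤ) : Prop :=
  ∀ u v : List A, u.Perm v → f u = f v

/-- The word `η 0 ^ (x 0) ⋯ η (k-1) ^ (x (k-1))`. -/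
def wordOf {A : Type} {k : ℕ} (η : Fin k → A) (x : Fin k → ℕ) : List A :=
  (List.finRange k).flatMap (fun i => List.replicate (x i) (η i))

/-- `g` represents the polynomial `P`. -/
def Represents {A : Type} {k : ℕ} (g : List A → ℤ) (P : MvPolynomial (Fin k) ℤ) : Prop :=
  ∃ η : Fin k → A, ∀ x : Fin k → ℕ,
    g (wordOf η x) = MvPolynomial.eval (fun i => (x i : ℤ)) P

/-- `g` represents the rational polynomial `P`. -/
def RepresentsQ {A : Type} {k : ℕ} (g : List A → ℤ) (P : MvPolynomial (Fin k) ℚ) : Prop :=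
  ∃ η : Fin k → A, ∀ x : Fin k → ℕ,
    (g (wordOf η x) : ℚ) = MvPolynomial.eval (fun i => (x i : ℚ)) P

/-- `α` is (the exponent vector of) a maximal monomial of `P` for the
divisibility preorder on monomials. -/
def MaxMonomial {k : ℕ} (P : MvPolynomial (Fin k) ℤ) (α : Fin k →₀ ℕ) : Prop :=
  α ∈ P.support ∧ ∀ β ∈ P.support, α ≤ β → β = α

/-- Partial substitution of natural numbers for some of the variables. -/
noncomputable def restrict {k : ℕ} (ν : Fin k → Option ℕ) (P : MvPolynomial (Fin k) ℤ) :
    MvPolynomial (Fin k) ℤ :=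
  MvPolynomial.bind₁
    (fun i => (ν i).elim (MvPolynomial.X i) (fun n => MvPolynomial.C (n : ℤ))) P

noncomputable def restrictQ {k : ℕ} (ν : Fin k → Option ℕ) (P : MvPolynomial (Fin k) ℚ) :
    MvPolynomial (Fin k) ℚ :=
  MvPolynomial.bind₁
    (fun i => (ν i).elim (MvPolynomial.X i) (fun n => MvPolynomial.C (n : ℚ))) P

/-- `PolyStrNNeg`: every maximal monomial of every partial evaluation of `P`
at natural numbers has a non-negative coefficient. -/
def PolyStrNNeg {k : ℕ} (P : MvPolynomial (Fin k) ℤ) : Prop :=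
  ∀ (ν : Fin k → Option ℕ) (α : Fin k →₀ ℕ),
    MaxMonomial (restrict ν P) α → 0 ≤ (restrict ν P).coeff α

/-- The translation `τ_K(P) = P(X₁ + K, …, X_k + K)`. -/
noncomputable def translate {k : ℕ} (K : ℕ) (P : MvPolynomial (Fin k) ℤ) :
    MvPolynomial (Fin k) ℤ :=
  MvPolynomial.bind₁ (fun i => MvPolynomial.X i + MvPolynomial.C (K : ℤ)) P

/-- The discrete derivative `Δ_K(P) = τ_K(P) - P`. -/
noncomputable def delta {k : ℕ} (K : ℕ) (P : MvPolynomial (Fin k) ℤ) :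
    MvPolynomial (Fin k) ℤ := translate K P - P

/-- `u ^ n` as concatenation. -/
def wpow {A : Type} (u : List A) (n : ℕ) : List A := (List.replicate n u).flatten

/-- A pumping pattern `q(x₁,…,x_p) = α₀ u₁^{x₁} α₁ ⋯ u_p^{x_p} α_p`. -/
def IsPumping {A : Type} {p : ℕ} (q : (Fin p → ℕ) → List A) : Prop :=
  ∃ (α : Fin (p + 1) → List A) (u : Fin p → List A),
    ∀ x : Fin p → ℕ,
      q x = α 0 ++ ((List.finRange p).map (fun i => wpow (u i) (x i) ++ α i.succ)).flatten

/-- A natural binomial function: an ℕ-linear combination of products of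
simple binomial functions `x ↦ binom (x - ℓ) k` (with truncated subtraction). -/
def IsNatBinomFun {p : ℕ} (F : (Fin p → ℕ) → ℕ) : Prop :=
  ∃ (n : ℕ) (c : Fin n → ℕ) (a b : Fin n → Fin p → ℕ),
    ∀ x : Fin p → ℕ, F x = ∑ i, c i * ∏ j, Nat.choose (x j - a i j) (b i j)

/-- The binomial monomial `pbinom (X_j - ℓ, m) = (X_j-ℓ)(X_j-ℓ-1)⋯(X_j-ℓ-m+1)/m!`. -/
noncomputable def pbinom {k : ℕ} (j : Fin k) (ℓ m : ℕ) : MvPolynomial (Fin k) ℚ :=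
  MvPolynomial.C ((m.factorial : ℚ)⁻¹) *
    ∏ t ∈ Finset.range m,
      (MvPolynomial.X j - MvPolynomial.C (ℓ : ℚ) - MvPolynomial.C (t : ℚ))

/-- Integer binomial polynomial: a ℤ-linear combination of products of
binomial monomials. -/
def IsIntBinomPoly {k : ℕ} (P : MvPolynomial (Fin k) ℚ) : Prop :=
  ∃ (n : ℕ) (c : Fin n → ℤ) (a b : Fin n → Fin k → ℕ),
    P = ∑ i, MvPolynomial.C (c i : ℚ) * ∏ j, pbinom j (a i j) (b i j)

/-- Natural binomial polynomial: an ℕ-linear combination of products of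
binomial monomials. -/
def IsNatBinomPoly {k : ℕ} (P : MvPolynomial (Fin k) ℚ) : Prop :=
  ∃ (n : ℕ) (c : Fin n → ℕ) (a b : Fin n → Fin k → ℕ),
    P = ∑ i, MvPolynomial.C (c i : ℚ) * ∏ j, pbinom j (a i j) (b i j)

/-- Strongly natural binomial polynomial: every partial substitution of
natural numbers yields a natural binomial polynomial. -/
def IsStrongNatBinomPoly {k : ℕ} (P : MvPolynomial (Fin k) ℚ) : Prop :=
  ∀ ν : Fin k → Option ℕ, IsNatBinomPoly (restrictQ ν P)

/-- Ultimately polynomial. -/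
def UltimatelyPoly {A : Type} (f : List A → ℤ) : Prop :=
  ∃ N₀ : ℕ, ∀ (p : ℕ) (q : (Fin p → ℕ) → List A), IsPumping q →
    ∃ P : MvPolynomial (Fin p) ℚ, ∀ x : Fin p → ℕ, (∀ i, N₀ ≤ x i) →
      (f (q x) : ℚ) = MvPolynomial.eval (fun i => (x i : ℚ)) P

/-- `(k,ℕ)`-combinatorial. -/
def Combinatorial {A : Type} (k : ℕ) (f : List A → ℤ) : Prop :=
  ∃ ω : ℕ, ∀ q : (Fin k → ℕ) → List A, IsPumping q →
    ∃ P : MvPolynomial (Fin k) ℚ, IsStrongNatBinomPoly P ∧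
      ∀ x : Fin k → ℕ, (∀ i, 1 ≤ x i) →
        (f (q (fun i => ω * x i)) : ℚ) = MvPolynomial.eval (fun i => (x i : ℚ)) P


/-- The sum of the maximal monomials of `P`. -/
noncomputable def maxPart {k : ℕ} (P : MvPolynomial (Fin k) ℤ) :
    MvPolynomial (Fin k) ℤ :=
  ∑ α ∈ P.support.filter (fun α => ∀ β ∈ P.support, α ≤ β → β = α),
    MvPolynomial.monomial α (P.coeff α)

open MvPolynomial Finset

lemma sum_mul_pow_nonneg_of_top_pos {ι : Type*} (s : Finset ι) (a : ι → ℤ) (e : ι → ℕ)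
    (n K : ℕ) (he : ∀ i ∈ s, e i ≤ n + 1) (htop : ∀ i ∈ s, e i = n + 1 → 0 < a i)
    (hex : ∃ i ∈ s, e i = n + 1) (hK : ∑ i ∈ s, |a i| ≤ K) :
    0 ≤ ∑ i ∈ s, a i * (K : ℤ) ^ e i := by
  obtain ⟨i₀, hi₀, hei₀⟩ := hex
  have hK1 : (1 : ℤ) ≤ K :=
    calc (1 : ℤ) ≤ a i₀ := htop i₀ hi₀ hei₀
      _ ≤ |a i₀| := le_abs_self _
      _ ≤ ∑ i ∈ s, |a i| := single_le_sum (fun i _ => abs_nonneg (a i)) hi₀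
      _ ≤ K := hK
  -- in units of `K ^ n`, a top term is worth `a i * K ≥ K` and any other term at least `-|a i|`
  set g : ι → ℤ := fun i => if e i = n + 1 then a i * K else -|a i| with hg_def
  have hterm : ∀ i ∈ s, (K : ℤ) ^ n * g i ≤ a i * (K : ℤ) ^ e i := by
    intro i hi
    by_cases hei : e i = n + 1
    · simp only [hg_def, if_pos hei]
      rw [hei, pow_succ]
      exact le_of_eq (by ring)
    · have hpow : (K : ℤ) ^ e i ≤ (K : ℤ) ^ n :=
        pow_le_pow_right₀ hK1 (by have := he i hi; omega)
      simp only [hg_def, if_neg hei]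
      nlinarith [neg_abs_le (a i), abs_nonneg (a i), pow_nonneg (zero_le_one.trans hK1) (e i)]
  have hg : 0 ≤ ∑ i ∈ s, g i := by
    have htop_sum : 1 ≤ ∑ i ∈ s with e i = n + 1, a i :=
      (htop i₀ hi₀ hei₀).trans_le <| single_le_sum
        (fun i hi => (htop i (mem_filter.mp hi).1 (mem_filter.mp hi).2).le)
        (mem_filter.mpr ⟨hi₀, hei₀⟩)
    have hrest : ∑ i ∈ s with ¬e i = n + 1, |a i| ≤ K :=
      (sum_le_sum_of_subset_of_nonneg (filter_subset _ _) fun _ _ _ => abs_nonneg _).trans hK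
    rw [hg_def, sum_ite, sum_neg_distrib, ← sum_mul]
    nlinarith
  calc (0 : ℤ) ≤ (K : ℤ) ^ n * ∑ i ∈ s, g i := mul_nonneg (pow_nonneg (by omega) n) hg
    _ = ∑ i ∈ s, (K : ℤ) ^ n * g i := mul_sum _ _ _
    _ ≤ _ := sum_le_sum hterm

lemma Finsupp.eq_of_le_of_degree_le {σ : Type*} {x y : σ →₀ ℕ} (h : x ≤ y)
    (hd : y.degree ≤ x.degree) : y = x := by
  have hsplit : y = x + (y - x) := (add_tsub_cancel_of_le h).symm
  have hdeg : (y - x).degree = 0 := by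
    have := congrArg Finsupp.degree hsplit
    rw [map_add] at this
    omega
  rw [hsplit, (Finsupp.degree_eq_zero_iff _).mp hdeg, add_zero]

section BindXAddC

variable {σ R : Type*} [CommSemiring R]

lemma X_add_C_pow (i : σ) (c : R) (n : ℕ) :
    (X i + C c : MvPolynomial σ R) ^ n =
      ∑ j ∈ range (n + 1), monomial (Finsupp.single i j) (n.choose j * c ^ (n - j)) := by
  rw [add_pow]
  refine sum_congr rfl fun j _ => ?_
  rw [X_pow_eq_monomial, ← C_pow, ← C_eq_coe_nat, mul_assoc, ← C_mul, mul_comm, C_mul_monomial,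
    mul_one, mul_comm (c ^ _)]

variable [Fintype σ]

lemma coeff_prod_X_add_C_pow (c : R) (β α : σ →₀ ℕ) :
    (∏ i, (X i + C c : MvPolynomial σ R) ^ β i).coeff α =
      ∏ i, ((β i).choose (α i) * c ^ (β i - α i)) := by
  simp_rw [X_add_C_pow, prod_univ_sum, ← monomial_sum_prod, coeff_sum, coeff_monomial,
    ← Finsupp.equivFunOnFinite_symm_eq_sum, Equiv.symm_apply_eq, sum_ite_eq',
    Fintype.mem_piFinset, mem_range, Nat.lt_succ_iff]
  split_ifs with hα
  · rfl
  · obtain ⟨i, hi⟩ := not_forall.mp hα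
    refine (prod_eq_zero (mem_univ i) ?_).symm
    rw [Nat.choose_eq_zero_of_lt (not_le.mp hi : β i < α i), Nat.cast_zero, zero_mul]

lemma coeff_bind₁_X_add_C (c : R) (P : MvPolynomial σ R) (α : σ →₀ ℕ) :
    (bind₁ (fun i => X i + C c) P).coeff α =
      ∑ β ∈ P.support, P.coeff β * ∏ i, ((β i).choose (α i) * c ^ (β i - α i)) := by
  conv_lhs => rw [P.as_sum, map_sum, coeff_sum]
  refine sum_congr rfl fun β _ => ?_
  rw [bind₁_monomial, prod_subset (subset_univ _) fun i _ hi => by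
    rw [Finsupp.notMem_support_iff.mp hi, pow_zero], coeff_C_mul, coeff_prod_X_add_C_pow]

end BindXAddC

section Translate

variable {k : ℕ}

lemma delta_add_translate_sub (K : ℕ) (P Q : MvPolynomial (Fin k) ℤ) :
    delta K Q + translate K (P - Q) = translate K P - Q := by
  rw [delta, translate, translate, map_sub]
  abel

lemma coeff_translate (K : ℕ) (P : MvPolynomial (Fin k) ℤ) (α : Fin k →₀ ℕ) :
    (translate K P).coeff α =
      ∑ β ∈ P.support with α ≤ β,
        P.coeff β * (∏ i, ((β i).choose (α i) : ℤ)) * (K : ℤ) ^ (β - α).degree := by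
  rw [translate, coeff_bind₁_X_add_C, sum_filter]
  refine sum_congr rfl fun β _ => ?_
  split_ifs with hαβ
  · rw [prod_mul_distrib, prod_pow_eq_pow_sum, Finsupp.degree_eq_sum, mul_assoc]
    simp only [Finsupp.coe_tsub, Pi.sub_apply]
  · obtain ⟨i, hi⟩ := not_forall.mp hαβ
    rw [prod_eq_zero (mem_univ i), mul_zero]
    rw [Nat.choose_eq_zero_of_lt (not_le.mp hi), Nat.cast_zero, zero_mul]

lemma coeff_maxPart (P : MvPolynomial (Fin k) ℤ) (α : Fin k →₀ ℕ) :
    (maxPart P).coeff α = if MaxMonomial P α then P.coeff α else 0 := by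
  rw [maxPart, coeff_sum]
  simp only [coeff_monomial, sum_ite_eq', mem_filter]
  exact if_congr Iff.rfl rfl rfl

lemma restrict_none (P : MvPolynomial (Fin k) ℤ) : restrict (fun _ => none) P = P := by
  simp [restrict]

lemma PolyStrNNeg.coeff_pos {P : MvPolynomial (Fin k) ℤ} (h : PolyStrNNeg P) {α : Fin k →₀ ℕ}
    (hα : MaxMonomial P α) : 0 < P.coeff α := by
  have := h (fun _ => none) α
  rw [restrict_none] at this
  exact (this hα).lt_of_ne (mem_support_iff.mp hα.1).symm

lemma coeff_translate_of_maxMonomial (K : ℕ) {P : MvPolynomial (Fin k) ℤ} {α : Fin k →₀ ℕ}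
    (hα : MaxMonomial P α) : (translate K P).coeff α = P.coeff α := by
  rw [coeff_translate, sum_eq_single_of_mem α (mem_filter.mpr ⟨hα.1, le_rfl⟩)]
  · simp
  · intro β hβ hne
    exact absurd (hα.2 β (mem_filter.mp hβ).1 (mem_filter.mp hβ).2) hne

lemma maxMonomial_of_degree_sub_le {P : MvPolynomial (Fin k) ℤ} {α β : Fin k →₀ ℕ}
    (hβ : β ∈ P.support) (hαβ : α ≤ β)
    (hmax : ∀ γ ∈ P.support, α ≤ γ → (γ - α).degree ≤ (β - α).degree) : MaxMonomial P β := by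
  refine ⟨hβ, fun γ hγ hβγ => ?_⟩
  have hαγ := hαβ.trans hβγ
  have hsub : γ - α = β - α :=
    Finsupp.eq_of_le_of_degree_le (tsub_le_tsub_right hβγ α) (hmax γ hγ hαγ)
  rw [← tsub_add_cancel_of_le hαγ, hsub, tsub_add_cancel_of_le hαβ]

/-- Since `(β choose α) ≤ 2 ^ |β|`, this bounds the coefficients in `coeff_translate`
uniformly in `α`. -/
noncomputable def coeffBound (P : MvPolynomial (Fin k) ℤ) : ℕ :=
  ∑ β ∈ P.support, (P.coeff β).natAbs * 2 ^ β.degree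

lemma sum_abs_coeff_mul_prod_choose_le (P : MvPolynomial (Fin k) ℤ) (α : Fin k →₀ ℕ) :
    ∑ β ∈ P.support with α ≤ β, |P.coeff β * ∏ i, ((β i).choose (α i) : ℤ)| ≤ coeffBound P := by
  rw [coeffBound, Nat.cast_sum]
  refine (sum_le_sum_of_subset_of_nonneg (filter_subset _ _) fun _ _ _ => abs_nonneg _).trans
    (sum_le_sum fun β _ => ?_)
  have hchoose : ∏ i, (β i).choose (α i) ≤ 2 ^ β.degree := by
    rw [Finsupp.degree_eq_sum, ← prod_pow_eq_pow_sum]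
    exact prod_le_prod' fun i _ => Nat.choose_le_two_pow _ _
  rw [abs_mul, ← Nat.cast_prod, Nat.abs_cast, Nat.cast_mul, Int.natCast_natAbs]
  gcongr

lemma PolyStrNNeg.coeff_translate_nonneg {P : MvPolynomial (Fin k) ℤ} (h : PolyStrNNeg P)
    {α : Fin k →₀ ℕ} (hα : ¬MaxMonomial P α) {K : ℕ} (hK : coeffBound P ≤ K) :
    0 ≤ (translate K P).coeff α := by
  rw [coeff_translate]
  set S := P.support.filter (α ≤ ·)
  rcases S.eq_empty_or_nonempty with hS | hS
  · rw [hS, sum_empty]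
  obtain ⟨β₀, hβ₀, hβ₀max⟩ := S.exists_max_image (fun β => (β - α).degree) hS
  have hmax : ∀ β ∈ S, (β₀ - α).degree ≤ (β - α).degree → MaxMonomial P β := by
    intro β hβ hβtop
    exact maxMonomial_of_degree_sub_le (mem_filter.mp hβ).1 (mem_filter.mp hβ).2
      fun γ hγ hαγ => (hβ₀max γ (mem_filter.mpr ⟨hγ, hαγ⟩)).trans hβtop
  obtain ⟨n, hn⟩ : ∃ n, (β₀ - α).degree = n + 1 := by
    refine Nat.exists_eq_succ_of_ne_zero fun h0 => hα ?_
    have hβ₀α : β₀ ≤ α := tsub_eq_zero_iff_le.mp ((Finsupp.degree_eq_zero_iff _).mp h0)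
    rw [← le_antisymm hβ₀α (mem_filter.mp hβ₀).2]
    exact hmax β₀ hβ₀ le_rfl
  refine sum_mul_pow_nonneg_of_top_pos S _ (fun β => (β - α).degree) n K
    (fun β hβ => hn ▸ hβ₀max β hβ) (fun β hβ hβtop => ?_) ⟨β₀, hβ₀, hn⟩
    ((sum_abs_coeff_mul_prod_choose_le P α).trans (by exact_mod_cast hK))
  exact mul_pos (h.coeff_pos (hmax β hβ (hn ▸ hβtop.ge)))
    (prod_pos fun i _ => Nat.cast_pos.mpr (Nat.choose_pos ((mem_filter.mp hβ).2 i)))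

end Translate

/-- for `P ∈ PolyStrNNeg`, with `P₁` the sum of its maximal
monomials and `P₂ = P - P₁`, there is `K` such that
`Δ_K(P₁) + τ_K(P₂) ∈ ℕ[X₁,…,X_k]`. -/
theorem statement5 {k : ℕ} (P : MvPolynomial (Fin k) ℤ) (h : PolyStrNNeg P) :
    ∃ K : ℕ, ∀ α : Fin k →₀ ℕ,
      0 ≤ (delta K (maxPart P) + translate K (P - maxPart P)).coeff α := by
  refine ⟨coeffBound P, fun α => ?_⟩
  rw [delta_add_translate_sub, coeff_sub, coeff_maxPart]
  split_ifs with hα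
  · rw [coeff_translate_of_maxMonomial _ hα, sub_self]
  · rw [sub_zero]
    exact h.coeff_translate_nonneg hα le_rfl

end NRatSeries
end

section
/- Let k ≥ 1 and let f : Σ* → ℕ be ℕ-polyregular of degree at most k. Then the relation ⊑_f^k on Σ*, defined by u ⊑_f^k v iff the function w ↦ f(vw) − f(uw) is ℕ-polyregular of degree at most k−1, is a well-quasi-ordering: every infinite sequence (u_n)_{n∈ℕ} of words admits indices i < j with u_i ⊑_f^k u_j. -/
open scoped BigOperators Classical

/-!
Fix a presentation `f w = ∑_{w = w₀⋯w_d} π (μ w₀, …, μ w_d)`. Sorting the decompositions of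
`u ++ w` by the number `s` of cuts falling strictly inside `u` gives
`f (u ++ w) = C_{([], μ u)} w + ∑_{p ∈ P u} C_p w`, where `P u` is the multiset of profiles
`(μ x₁, …, μ x_s; μ x)` of the factorisations `u = x₁ ⋯ x_s x` with `1 ≤ s ≤ d` and `x ≠ []`,
and `C_p` sums `π` over the decompositions of `w` into `d + 1 - s` factors, the first of them
glued to `x`. For `s ≥ 1`, `C_p` is ℕ-polyregular of degree `d - s ≤ d - 1`. So if `μ u = μ v`
and `P u ≤ P v`, then `f (v ++ w) - f (u ++ w) = ∑_{p ∈ P v - P u} C_p w` lies in `NPoly[d-1]`.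
Profiles range over a finite set, so by the pigeonhole principle and Dickson's lemma every
sequence of words contains such a pair `u i, u j` with `i < j`.
-/

theorem List.sum_map_flatMap {α β γ : Type*} [AddCommMonoid γ] (L : List α) (f : α → List β)
    (F : β → γ) : ((L.flatMap f).map F).sum = (L.map fun x => ((f x).map F).sum).sum := by
  induction L with
  | nil => simp
  | cons a L ih => simp [ih]

theorem List.sum_map_finsetSum {α ι γ : Type*} [AddCommMonoid γ] (L : List α) (s : Finset ι)
    (F : ι → α → γ) : (L.map fun x => ∑ i ∈ s, F i x).sum = ∑ i ∈ s, (L.map (F i)).sum := by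
  induction L with
  | nil => simp
  | cons a L ih => simp [ih, Finset.sum_add_distrib]

theorem Set.Finite.wellQuasiOrdered_multiset_le {α : Type*} {S : Set α} (hS : S.Finite) :
    WellQuasiOrdered fun m₁ m₂ : {m : Multiset α // ∀ a ∈ m, a ∈ S} => m₁.1 ≤ m₂.1 := by
  have := hS.to_subtype
  intro f
  obtain ⟨i, j, hij, hcount⟩ := wellQuasiOrdered_le fun n (a : S) => (f n).1.count (a : α)
  refine ⟨i, j, hij, Multiset.le_iff_count.2 fun a => ?_⟩
  by_cases ha : a ∈ S
  · exact hcount ⟨a, ha⟩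
  · simp [Multiset.count_eq_zero.2 fun h => ha ((f i).2 a h)]

theorem Multiset.sum_map_finsetSum {ι α M : Type*} [AddCommMonoid M] (s : Finset ι)
    (m : ι → Multiset α) (g : α → M) :
    ((∑ i ∈ s, m i).map g).sum = ∑ i ∈ s, ((m i).map g).sum :=
  map_sum (Multiset.sumAddMonoidHom.comp (Multiset.mapAddMonoidHom g)) m s

namespace NRatSeries

section Decompositions

variable {A : Type}

theorem splits_eq (w : List A) :
    splits w = ([], w) :: (List.range w.length).map fun i => (w.take (i + 1), w.drop (i + 1)) := by
  simp [splits, List.range_succ_eq_map]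

theorem splits_append (u w : List A) :
    splits (u ++ w) = (splits u).dropLast.map (fun p => (p.1, p.2 ++ w))
      ++ (splits w).map fun p => (u ++ p.1, p.2) := by
  unfold splits
  rw [List.length_append, Nat.add_assoc, List.range_add, List.range_succ (n := u.length)]
  simp only [List.map_append, List.map_singleton, List.dropLast_concat, List.map_map]
  congr 1
  · refine List.map_congr_left fun i hi => ?_
    simp [List.take_append, List.drop_append, Nat.sub_eq_zero_of_le (List.mem_range.1 hi).le]
  · simp [List.take_append, List.drop_append]

theorem decomps_succ (n : ℕ) (w : List A) :
    decomps (n + 1) w = (splits w).flatMap fun p => (decomps n p.2).map (p.1 :: ·) := rfl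

theorem decomps_one (w : List A) : decomps 1 w = [[w]] := by
  simp [decomps, splits, List.range_succ]

theorem length_of_mem_decomps {n : ℕ} {w : List A} {l : List (List A)} (hl : l ∈ decomps n w) :
    l.length = n := by
  induction n generalizing w l with
  | zero => simp only [decomps] at hl; split at hl <;> simp_all
  | succ n ih =>
    simp only [decomps, List.mem_flatMap, List.mem_map] at hl
    obtain ⟨p, -, l', hl', rfl⟩ := hl
    simp [ih hl']

/-- The decompositions of `u` into `s` factors followed by a remainder, with each cut strictly
before the end of what is left of `u`; so the remainder is nonempty as soon as `s ≥ 1`. -/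
def partialDecomps : ℕ → List A → List (List (List A) × List A)
  | 0, u => [([], u)]
  | s + 1, u => (splits u).dropLast.flatMap
      fun p => (partialDecomps s p.2).map fun x => (p.1 :: x.1, x.2)

theorem length_of_mem_partialDecomps {s : ℕ} {u : List A} {x : List (List A) × List A}
    (hx : x ∈ partialDecomps s u) : x.1.length = s := by
  induction s generalizing u x with
  | zero => simp_all [partialDecomps]
  | succ s ih =>
    simp only [partialDecomps, List.mem_flatMap, List.mem_map] at hx
    obtain ⟨p, -, y, hy, rfl⟩ := hx
    simp [ih hy]

theorem sum_decomps_append {β : Type*} [AddCommMonoid β] (F : List (List A) → β) (n : ℕ)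
    (u w : List A) :
    ((decomps (n + 1) (u ++ w)).map F).sum =
      ∑ s ∈ Finset.range (n + 1), ((partialDecomps s u).map fun x =>
        ((decomps (n + 1 - s) w).map fun l =>
          F (x.1 ++ (x.2 ++ l.headD []) :: l.tail)).sum).sum := by
  induction n generalizing u F with
  | zero => simp [decomps_one, partialDecomps]
  | succ n ih =>
    rw [decomps_succ, splits_append, List.flatMap_append, List.map_append, List.sum_append,
      List.sum_map_flatMap, List.sum_map_flatMap, Finset.sum_range_succ']
    congr 1
    · simp only [List.map_map, Function.comp_def, ih, List.sum_map_finsetSum]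
      refine Finset.sum_congr rfl fun s _ => ?_
      simp [partialDecomps, List.sum_map_flatMap, Function.comp_def]
    · simp [partialDecomps, decomps_succ, List.sum_map_flatMap, Function.comp_def]

end Decompositions

section Closure

variable {A : Type}

theorem NPolyD.zero (e : ℕ) : NPolyD e (0 : List A → ℤ) :=
  ⟨{ M := Unit, μ := fun _ => 1, π := 0, map_nil := rfl, map_append := fun _ _ => rfl },
    fun w => by simp, fun _ => le_rfl⟩

theorem NPolyD.add {e : ℕ} {g h : List A → ℤ} (hg : NPolyD e g) (hh : NPolyD e h) :
    NPolyD e (g + h) := by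
  obtain ⟨D, hD, hDn⟩ := hg
  obtain ⟨E, hE, hEn⟩ := hh
  refine ⟨{ M := D.M × E.M
            μ := fun w => (D.μ w, E.μ w)
            π := fun y => D.π (Prod.fst ∘ y) + E.π (Prod.snd ∘ y)
            map_nil := by simp [D.map_nil, E.map_nil]
            map_append := fun u v => by simp [D.map_append, E.map_append] },
    fun w => ?_, fun y => add_nonneg (hDn _) (hEn _)⟩
  simp only [Pi.add_apply, hD w, hE w, List.sum_map_add]
  rfl

theorem NPolyD.multisetSum {e : ℕ} (P : Multiset (List A → ℤ)) (hP : ∀ g ∈ P, NPolyD e g) :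
    NPolyD e P.sum :=
  Multiset.sum_induction _ P (fun _ _ => NPolyD.add) (NPolyD.zero e) hP

/-- Raising the degree: an extra first factor is allowed, and counted only when it is empty.
Emptiness is not visible in `D.M`, so it is recorded by a flag in the multiplicative monoid of
`ZMod 2`. -/
theorem NPolyD.succ {e : ℕ} {g : List A → ℤ} (hg : NPolyD e g) : NPolyD (e + 1) g := by
  obtain ⟨D, hD, hDn⟩ := hg
  refine ⟨{ M := D.M × ZMod 2
            μ := fun w => (D.μ w, if w = [] then 1 else 0)
            π := fun y => if (y 0).2 = 1 then D.π fun i => (y i.succ).1 else 0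
            map_nil := by simp [D.map_nil]
            map_append := fun u v => by
              by_cases hu : u = [] <;> by_cases hv : v = [] <;>
                simp [D.map_append, D.map_nil, hu, hv] },
    fun w => ?_, fun y => by dsimp only; split_ifs; exacts [hDn _, le_rfl]⟩
  rw [hD w, decomps_succ (e + 1), List.sum_map_flatMap, splits_eq]
  by_cases hw : w = [] <;> simp [Function.comp_def, hw]

theorem NPolyD.mono {e e' : ℕ} (h : e ≤ e') {g : List A → ℤ} (hg : NPolyD e g) : NPolyD e' g := by
  induction e', h using Nat.le_induction with
  | base => exact hg
  | succ e' _ ih => exact ih.succ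

end Closure

def glue {M : Type*} [Monoid M] (ps : List M) (m : M) (ys : List M) : List M :=
  ps ++ (m * ys.headD 1) :: ys.tail

namespace PolyRegData

variable {A : Type} {d : ℕ} (D : PolyRegData A d)

def value (ys : List D.M) : ℤ := D.π fun i => ys.getD i 1

theorem π_eq_value (l : List (List A)) :
    (D.π fun i => D.μ (l.getD i [])) = D.value (l.map D.μ) := by
  simp only [value, ← D.map_nil, List.getD_map]

theorem map_glue (xs : List (List A)) (x : List A) (l : List (List A)) :
    (xs ++ (x ++ l.headD []) :: l.tail).map D.μ = glue (xs.map D.μ) (D.μ x) (l.map D.μ) := by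
  cases l <;> simp [glue, D.map_append]

theorem npolyD_sum_decomps {G : List D.M → ℤ} (hG : ∀ ys, 0 ≤ G ys) (e : ℕ) :
    NPolyD e fun w => ((decomps (e + 1) w).map fun l => G (l.map D.μ)).sum := by
  refine ⟨{ M := D.M, μ := D.μ, π := fun y => G (List.ofFn y),
            map_nil := D.map_nil, map_append := D.map_append }, fun w => ?_, fun y => hG _⟩
  refine congrArg List.sum (List.map_congr_left fun l hl => congrArg G ?_)
  have hlen := length_of_mem_decomps hl
  refine List.ext_getElem (by simp [hlen]) fun i h₁ h₂ => ?_
  simp only [List.getElem_map, List.getElem_ofFn]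
  rw [List.getD_eq_getElem _ _ (by simpa using h₁)]

def profile (x : List (List A) × List A) : List D.M × D.M := (x.1.map D.μ, D.μ x.2)

def completion (p : List D.M × D.M) (w : List A) : ℤ :=
  ((decomps (d - p.1.length + 1) w).map fun l => D.value (glue p.1 p.2 (l.map D.μ))).sum

def innerProfiles (u : List A) : Multiset (List D.M × D.M) :=
  ∑ s ∈ Finset.range d, ((partialDecomps (s + 1) u).map D.profile : Multiset _)

theorem mem_innerProfiles {u : List A} {p : List D.M × D.M} (hp : p ∈ D.innerProfiles u) :
    1 ≤ p.1.length ∧ p.1.length ≤ d := by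
  obtain ⟨s, hs, hp⟩ := Multiset.mem_sum.1 hp
  obtain ⟨x, hx, rfl⟩ := List.mem_map.1 (Multiset.mem_coe.1 hp)
  have := List.mem_range.1 hs
  simp only [profile, List.length_map, length_of_mem_partialDecomps hx]
  omega

theorem npolyD_completion (hD : D.NatOutput) (p : List D.M × D.M) :
    NPolyD (d - p.1.length) (D.completion p) :=
  D.npolyD_sum_decomps (G := fun ys => D.value (glue p.1 p.2 ys)) (fun _ => hD _) _

theorem computes_append {f : List A → ℤ} (hD : D.Computes f) (u w : List A) :
    f (u ++ w) = D.completion ([], D.μ u) w + ((D.innerProfiles u).map (D.completion · w)).sum := by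
  rw [hD (u ++ w), sum_decomps_append _ d u w, Finset.sum_range_succ', add_comm]
  simp only [π_eq_value, map_glue]
  congr 1
  · simp [partialDecomps, completion]
  · rw [innerProfiles, Multiset.sum_map_finsetSum]
    refine Finset.sum_congr rfl fun s hs => ?_
    simp only [Multiset.map_coe, Multiset.sum_coe, List.map_map]
    refine congrArg List.sum (List.map_congr_left fun x hx => ?_)
    have hd : d - (s + 1) + 1 = d + 1 - (s + 1) := by have := List.mem_range.1 hs; omega
    simp only [Function.comp_apply, completion, profile, List.length_map,
      length_of_mem_partialDecomps hx, hd]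

theorem npolyD_sub_of_innerProfiles_le {f : List A → ℤ} (hD : D.Computes f) (hDn : D.NatOutput)
    {u v : List A} (hμ : D.μ u = D.μ v) (hle : D.innerProfiles u ≤ D.innerProfiles v) :
    NPolyD (d - 1) fun w => f (v ++ w) - f (u ++ w) := by
  have hdiff : (fun w => f (v ++ w) - f (u ++ w)) =
      ((D.innerProfiles v - D.innerProfiles u).map D.completion).sum := by
    funext w
    rw [D.computes_append hD, D.computes_append hD, hμ, ← add_tsub_cancel_of_le hle,
      Pi.multiset_sum_apply]
    simp [Multiset.map_map]
  rw [hdiff]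
  refine NPolyD.multisetSum _ fun g hg => ?_
  obtain ⟨p, hp, rfl⟩ := Multiset.mem_map.1 hg
  have := D.mem_innerProfiles (Multiset.mem_of_le tsub_le_self hp)
  exact (D.npolyD_completion hDn p).mono (by omega)

theorem wellQuasiOrdered_innerProfiles :
    WellQuasiOrdered fun u v : List A => D.μ u = D.μ v ∧ D.innerProfiles u ≤ D.innerProfiles v := by
  have hS : Set.Finite {p : List D.M × D.M | p.1.length ≤ d} :=
    ((List.finite_length_le D.M d).prod Set.finite_univ).subset fun p hp => ⟨hp, trivial⟩
  intro f
  exact (Finite.wellQuasiOrdered (α := D.M) (· = ·)).prod hS.wellQuasiOrdered_multiset_le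
    fun n => (D.μ (f n), ⟨D.innerProfiles (f n), fun p hp => (D.mem_innerProfiles hp).2⟩)

end PolyRegData

theorem statement15_general {A : Type} (k : ℕ)
    (f : List A → ℕ) (hf : NPolyD k (fun w => (f w : ℤ))) :
    ∀ u : ℕ → List A, ∃ i j : ℕ, i < j ∧
      NPolyD (k - 1) (fun w => (f (u j ++ w) : ℤ) - (f (u i ++ w) : ℤ)) := by
  obtain ⟨D, hD, hDn⟩ := hf
  intro u
  obtain ⟨i, j, hij, hμ, hle⟩ := D.wellQuasiOrdered_innerProfiles u
  exact ⟨i, j, hij, D.npolyD_sub_of_innerProfiles_le hD hDn hμ hle⟩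

/-- for `k ≥ 1` and `f : Σ* → ℕ` ℕ-polyregular of degree at most
`k`, the relation `u ⊑_f^k v` (the derivative `w ↦ f(vw) − f(uw)` is in
`NPoly[k−1]`) is a well-quasi-ordering on `Σ*`. -/
theorem statement15 {A : Type} [Fintype A] (k : ℕ) (hk : 1 ≤ k)
    (f : List A → ℕ) (hf : NPolyD k (fun w => (f w : ℤ))) :
    ∀ u : ℕ → List A, ∃ i j : ℕ, i < j ∧
      NPolyD (k - 1) (fun w => (f (u j ++ w) : ℤ) - (f (u i ++ w) : ℤ)) :=
  statement15_general k f hf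

end NRatSeries
end
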